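/- arXiv:1204.1146 — 4 statements merged into one kernel-verified Lean document; each statement's English description precedes it below -/
import Mathlib

section
/- For Re(s) > 1, the Dirichlet series ∑_{n=1}^∞ f₁(n)/n^s equals ζ(s)² ζ(2s−1), where f₁(n) = ∑_{m | n} σ(gcd(m, n/m)). -/
open Complex LSeries Finset
open scoped LSeries.notation

noncomputable def hfun : ℕ → ℂ := fun n => if IsSquare n then (Nat.sqrt n : ℂ) else 0

lemma term_sq (s : ℂ) (d : ℕ) :
    LSeries.term hfun s (d * d) = LSeries.term (1 : ℕ → ℂ) (2 * s - 1) d := by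
  rcases eq_or_ne d 0 with rfl | hd
  · simp
  have hdd : d * d ≠ 0 := Nat.mul_ne_zero hd hd
  rw [LSeries.term_of_ne_zero hdd, LSeries.term_of_ne_zero hd]
  have hc : (d : ℂ) ≠ 0 := Nat.cast_ne_zero.mpr hd
  have h1 : hfun (d * d) = (d : ℂ) := by
    simp [hfun, IsSquare, Nat.sqrt_eq, (⟨d, rfl⟩ : ∃ r, d * d = r * r)]
  rw [h1, Pi.one_apply]
  have h2 : ((d : ℂ)) ^ (2 * s - 1) = ((d : ℂ)) ^ (2 * s) / (d : ℂ) := by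
    rw [cpow_sub _ _ hc, cpow_one]
  have h3 : ((d : ℂ)) ^ (2 * s) = (((d * d : ℕ) : ℂ)) ^ s := by
    have := natCast_cpow_natCast_mul d 2 s
    push_cast at this ⊢
    rw [this]; ring_nf
  rw [h2, h3, one_div_div]

lemma sq_inj : Function.Injective (fun d : ℕ => d * d) := fun a b h => by
  simpa using Nat.mul_self_inj.mp h

lemma term_hfun_zero {s : ℂ} {x : ℕ} (hx : x ∉ Set.range (fun d : ℕ => d * d)) :
    LSeries.term hfun s x = 0 := by
  rcases eq_or_ne x 0 with rfl | h0
  · simp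
  rw [LSeries.term_of_ne_zero h0]
  have : ¬ IsSquare x := by
    rintro ⟨r, hr⟩
    exact hx ⟨r, hr.symm⟩
  simp [hfun, this]

lemma hfun_summable {s : ℂ} (hs : 1 < (2 * s - 1).re) : LSeriesSummable hfun s := by
  rw [LSeriesSummable, ← (sq_inj.summable_iff fun x hx => term_hfun_zero hx)]
  have : (LSeries.term hfun s ∘ fun d : ℕ => d * d) = LSeries.term (1 : ℕ → ℂ) (2 * s - 1) :=
    funext fun d => term_sq s d
  rw [this]
  exact LSeriesSummable_one_iff.mpr hs

lemma hfun_LSeries {s : ℂ} (hs : 1 < (2 * s - 1).re) :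
    LSeries hfun s = riemannZeta (2 * s - 1) := by
  rw [← LSeries_one_eq_riemannZeta hs]
  unfold LSeries
  rw [← sq_inj.tsum_eq (f := LSeries.term hfun s) (by
    intro x hx
    by_contra h
    exact hx (term_hfun_zero h))]
  · exact tsum_congr fun d => term_sq s d

lemma key_nat (n : ℕ) :
    (∑ m ∈ n.divisors, ∑ d ∈ (Nat.gcd m (n / m)).divisors, d)
      = ∑ p ∈ n.divisorsAntidiagonal,
          if IsSquare p.1 then Nat.sqrt p.1 * p.2.divisorsAntidiagonal.card else 0 := by
  rw [← Finset.sum_filter]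
  have hR : ∀ p ∈ n.divisorsAntidiagonal.filter (fun p => IsSquare p.1),
      Nat.sqrt p.1 * p.2.divisorsAntidiagonal.card
        = ∑ _q ∈ p.2.divisorsAntidiagonal, Nat.sqrt p.1 := by
    intro p _
    rw [Finset.sum_const, smul_eq_mul, mul_comm]
  rw [Finset.sum_congr rfl hR, Finset.sum_sigma', Finset.sum_sigma']
  refine Finset.sum_nbij'
    (i := fun x => ⟨(x.2 * x.2, n / (x.2 * x.2)), (x.1 / x.2, n / (x.2 * x.2) / (x.1 / x.2))⟩)
    (j := fun y => ⟨Nat.sqrt y.1.1 * y.2.1, Nat.sqrt y.1.1⟩) ?_ ?_ ?_ ?_ ?_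
  · -- i maps into target
    rintro ⟨m, d⟩ hx
    simp only [Finset.mem_sigma, Nat.mem_divisors] at hx
    obtain ⟨⟨hmn, hn0⟩, hd⟩ := hx
    have hm0 : m ≠ 0 := by rintro rfl; simp [Nat.zero_dvd.mp hmn] at hn0
    have hg0 : Nat.gcd m (n / m) ≠ 0 := Nat.gcd_ne_zero_left hm0
    have hdg := hd.1
    have hd0 : d ≠ 0 := by rintro rfl; exact hg0 (Nat.eq_zero_of_zero_dvd hdg)
    have hdm : d ∣ m := hdg.trans (Nat.gcd_dvd_left _ _)
    have hdnm : d ∣ n / m := hdg.trans (Nat.gcd_dvd_right _ _)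
    have hdmn : d * m ∣ n := by
      have : d * m ∣ (n / m) * m := mul_dvd_mul_right hdnm m
      rwa [Nat.div_mul_cancel hmn] at this
    have hd2 : d * d ∣ n := (mul_dvd_mul_left d hdm).trans hdmn
    obtain ⟨e, he⟩ := hdm
    have hme : m / d = e := by rw [he, Nat.mul_div_cancel_left _ (Nat.pos_of_ne_zero hd0)]
    have hd2e : d * d * e ∣ n := by
      have : d * d * e = d * m := by rw [he]; ring
      rwa [this]
    have heb : e ∣ n / (d * d) := (Nat.dvd_div_iff_mul_dvd hd2).mpr hd2e
    simp only [Finset.mem_sigma, Finset.mem_filter, Nat.mem_divisorsAntidiagonal]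
    refine ⟨⟨⟨Nat.mul_div_cancel' hd2, hn0⟩, ⟨d, rfl⟩⟩, ?_, ?_⟩
    · rw [hme]; exact Nat.mul_div_cancel' heb
    · intro hb
      have := Nat.mul_div_cancel' hd2
      rw [hb, mul_zero] at this
      exact hn0 this.symm
  · -- j maps into source
    rintro ⟨⟨a, b⟩, e, f⟩ hy
    simp only [Finset.mem_sigma, Finset.mem_filter, Nat.mem_divisorsAntidiagonal] at hy
    obtain ⟨⟨⟨hab, hn0⟩, hsq⟩, hef, hb0⟩ := hy
    obtain ⟨r, hr⟩ := hsq
    subst hr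
    have ha0 : r * r ≠ 0 := by rintro h; rw [h] at hab; simp at hab; exact hn0 hab.symm
    have hr0 : r ≠ 0 := by rintro rfl; simp at ha0
    have he0 : e ≠ 0 := by rintro rfl; simp at hef; exact hb0 hef.symm
    have hre0 : r * e ≠ 0 := Nat.mul_ne_zero hr0 he0
    have hneq : n = (r * e) * (r * f) := by rw [← hab, ← hef]; ring
    have hdiv : n / (r * e) = r * f := by
      rw [hneq, Nat.mul_div_cancel_left _ (Nat.pos_of_ne_zero hre0)]
    simp only [Finset.mem_sigma, Nat.mem_divisors, Nat.sqrt_eq]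
    refine ⟨⟨⟨r * f, hneq⟩, hn0⟩, ?_, ?_⟩
    · rw [hdiv]
      exact Nat.dvd_gcd ⟨e, rfl⟩ ⟨f, rfl⟩
    · exact Nat.gcd_ne_zero_left hre0
  · -- left inverse
    rintro ⟨m, d⟩ hx
    simp only [Finset.mem_sigma, Nat.mem_divisors] at hx
    obtain ⟨⟨hmn, hn0⟩, hdg, hg0⟩ := hx
    have hdm : d ∣ m := hdg.trans (Nat.gcd_dvd_left _ _)
    simp [Nat.sqrt_eq, Nat.mul_div_cancel' hdm]
  · -- right inverse
    rintro ⟨⟨a, b⟩, e, f⟩ hy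
    simp only [Finset.mem_sigma, Finset.mem_filter, Nat.mem_divisorsAntidiagonal] at hy
    obtain ⟨⟨⟨hab, hn0⟩, hsq⟩, hef, hb0⟩ := hy
    obtain ⟨r, hr⟩ := hsq
    subst hr
    have ha0 : r * r ≠ 0 := by rintro h; rw [h] at hab; simp at hab; exact hn0 hab.symm
    have hr0 : r ≠ 0 := by rintro rfl; simp at ha0
    have he0 : e ≠ 0 := by rintro rfl; simp at hef; exact hb0 hef.symm
    have hnb : n / (r * r) = b := by
      rw [← hab, Nat.mul_div_cancel_left _ (Nat.pos_of_ne_zero ha0)]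
    have hbe : b / e = f := by
      rw [← hef, Nat.mul_div_cancel_left _ (Nat.pos_of_ne_zero he0)]
    simp [Nat.sqrt_eq, hnb, Nat.mul_div_cancel_left _ (Nat.pos_of_ne_zero hr0), hbe]
  · -- values agree
    rintro ⟨m, d⟩ hx
    simp [Nat.sqrt_eq]

lemma conv_eq (n : ℕ) (hn : n ≠ 0) :
    (hfun ⍟ ((1 : ℕ → ℂ) ⍟ 1)) n
      = ((∑ m ∈ n.divisors, ∑ d ∈ (Nat.gcd m (n / m)).divisors, d : ℕ) : ℂ) := by
  rw [key_nat]
  simp only [LSeries.convolution_def, Pi.one_apply, one_mul, Finset.sum_const, nsmul_eq_mul,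
    mul_one]
  push_cast [apply_ite (Nat.cast : ℕ → ℂ)]
  refine Finset.sum_congr rfl fun p hp => ?_
  simp [hfun, ite_mul, mul_comm]

theorem dirichlet_series_f_one (s : ℂ) (hs : 1 < s.re) :
    ∑' n : ℕ,
        ((∑ m ∈ (n + 1).divisors, ∑ d ∈ (Nat.gcd m ((n + 1) / m)).divisors, d : ℕ) : ℂ) /
          ((n + 1 : ℕ) : ℂ) ^ s
      = riemannZeta s ^ 2 * riemannZeta (2 * s - 1) := by
  have hs2 : 1 < (2 * s - 1).re := by
    have : (2 * s - 1).re = 2 * s.re - 1 := by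
      simp [Complex.sub_re, Complex.mul_re]
    rw [this]; linarith
  have h1 : LSeriesSummable (1 : ℕ → ℂ) s := LSeriesSummable_one_iff.mpr hs
  have hh : LSeriesSummable hfun s := hfun_summable hs2
  have hF : LSeriesSummable (hfun ⍟ ((1 : ℕ → ℂ) ⍟ 1)) s := hh.convolution (h1.convolution h1)
  have hterm : ∀ n : ℕ,
      ((∑ m ∈ (n + 1).divisors, ∑ d ∈ (Nat.gcd m ((n + 1) / m)).divisors, d : ℕ) : ℂ) /
          ((n + 1 : ℕ) : ℂ) ^ s
        = LSeries.term (hfun ⍟ ((1 : ℕ → ℂ) ⍟ 1)) s (n + 1) := by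
    intro n
    rw [LSeries.term_of_ne_zero (Nat.succ_ne_zero n), conv_eq _ (Nat.succ_ne_zero n)]
  calc ∑' n : ℕ,
        ((∑ m ∈ (n + 1).divisors, ∑ d ∈ (Nat.gcd m ((n + 1) / m)).divisors, d : ℕ) : ℂ) /
          ((n + 1 : ℕ) : ℂ) ^ s
      = ∑' n : ℕ, LSeries.term (hfun ⍟ ((1 : ℕ → ℂ) ⍟ 1)) s (n + 1) := tsum_congr hterm
    _ = LSeries (hfun ⍟ ((1 : ℕ → ℂ) ⍟ 1)) s := by
        rw [LSeries, Summable.tsum_eq_zero_add hF, LSeries.term_zero, zero_add]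
    _ = LSeries hfun s * (LSeries (1 : ℕ → ℂ) s * LSeries (1 : ℕ → ℂ) s) := by
        rw [LSeries_convolution' hh (h1.convolution h1), LSeries_convolution' h1 h1]
    _ = riemannZeta s ^ 2 * riemannZeta (2 * s - 1) := by
        rw [hfun_LSeries hs2, LSeries_one_eq_riemannZeta hs]; ring
end

section
/- The modified Pillai function P*(n) = (1/n) ∑_{k=1}^n gcd(k², n) is a multiplicative arithmetic function (with rational values). -/
/-- Modified Pillai function `P*(n) = (1/n) ∑_{k=1}^n gcd(k², n)`, with rational values. -/
noncomputable def Pstar (n : ℕ) : ℚ :=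
  (∑ k ∈ Finset.Icc 1 n, (Nat.gcd (k ^ 2) n : ℚ)) / n

lemma gcd_sq_mod (k m : ℕ) : Nat.gcd ((k % m) ^ 2) m = Nat.gcd (k ^ 2) m := by
  conv_lhs => rw [Nat.gcd_comm, Nat.gcd_rec]
  conv_rhs => rw [Nat.gcd_comm, Nat.gcd_rec, Nat.pow_mod]

lemma sum_icc_eq_range (n : ℕ) (hn : 0 < n) :
    ∑ k ∈ Finset.Icc 1 n, (Nat.gcd (k ^ 2) n : ℚ) =
    ∑ k ∈ Finset.range n, (Nat.gcd (k ^ 2) n : ℚ) := by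
  rw [show Finset.Icc 1 n = insert n (Finset.Ico 1 n) by
      ext x; simp [Finset.mem_insert]; omega,
    show Finset.range n = insert 0 (Finset.Ico 1 n) by
      ext x; simp [Finset.mem_insert]; omega]
  rw [Finset.sum_insert (by simp), Finset.sum_insert (by simp)]
  congr 1
  simp [Nat.gcd_comm, Nat.gcd_eq_left (dvd_pow_self n two_ne_zero)]

lemma sum_mul_eq (m n : ℕ) (hm : 0 < m) (hn : 0 < n) (h : Nat.Coprime m n) :
    ∑ k ∈ Finset.range (m * n), (Nat.gcd (k ^ 2) (m * n) : ℚ) =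
    (∑ k ∈ Finset.range m, (Nat.gcd (k ^ 2) m : ℚ)) *
    (∑ k ∈ Finset.range n, (Nat.gcd (k ^ 2) n : ℚ)) := by
  rw [Finset.sum_mul_sum, ← Finset.sum_product']
  apply Finset.sum_nbij' (i := fun k => (k % m, k % n))
    (j := fun p => (Nat.chineseRemainder h p.1 p.2 : ℕ))
  · intro k hk
    simp only [Finset.mem_product, Finset.mem_range]
    exact ⟨Nat.mod_lt _ hm, Nat.mod_lt _ hn⟩
  · rintro ⟨a, b⟩ hp
    simp only [Finset.mem_range]
    exact Nat.chineseRemainder_lt_mul h a b hm.ne' hn.ne'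
  · intro k hk
    simp only [Finset.mem_range] at hk
    have hx1 := (Nat.chineseRemainder h (k % m) (k % n)).2.1
    have hx2 := (Nat.chineseRemainder h (k % m) (k % n)).2.2
    set x := ((Nat.chineseRemainder h (k % m) (k % n)) : ℕ) with hxdef
    have hxk : x ≡ k [MOD m * n] := by
      rw [← Nat.modEq_and_modEq_iff_modEq_mul h]
      constructor
      · exact hx1.trans (Nat.mod_modEq k m)
      · exact hx2.trans (Nat.mod_modEq k n)
    have hxlt : x < m * n := Nat.chineseRemainder_lt_mul h _ _ hm.ne' hn.ne'
    simpa [Nat.ModEq, Nat.mod_eq_of_lt hxlt, Nat.mod_eq_of_lt hk] using hxk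
  · rintro ⟨a, b⟩ hp
    simp only [Finset.mem_product, Finset.mem_range] at hp
    have hx1 := (Nat.chineseRemainder h a b).2.1
    have hx2 := (Nat.chineseRemainder h a b).2.2
    set x := ((Nat.chineseRemainder h a b) : ℕ) with hxdef
    have h1 : x % m = a := by
      have := hx1; rwa [Nat.ModEq, Nat.mod_eq_of_lt hp.1] at this
    have h2 : x % n = b := by
      have := hx2; rwa [Nat.ModEq, Nat.mod_eq_of_lt hp.2] at this
    simp [h1, h2]
  · intro k hk
    rw [h.gcd_mul (k ^ 2)]
    push_cast
    rw [← gcd_sq_mod k m, ← gcd_sq_mod k n]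

theorem Pstar_multiplicative :
    Pstar 1 = 1 ∧
    ∀ m n : ℕ, 0 < m → 0 < n → Nat.Coprime m n →
      Pstar (m * n) = Pstar m * Pstar n := by
  constructor
  · simp [Pstar]
  · intro m n hm hn h
    unfold Pstar
    rw [sum_icc_eq_range _ (Nat.mul_pos hm hn), sum_icc_eq_range m hm, sum_icc_eq_range n hn,
      sum_mul_eq m n hm hn h]
    push_cast
    field_simp
end

section
/- For every ε > 0 there is a constant C such that for all n ≥ 1, f*(n) ≤ C n^{1/2+ε}, where f*(n) = ∑_{m | n} gcd(m, n/m). -/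
open Finset Real

lemma prime_factor_bound (ε : ℝ) (hε : 0 < ε) (p a : ℕ) (hp : 2 ≤ p) :
    ((a : ℝ) + 1) ≤
      (if (p : ℝ) ^ ε < 2 then max 1 (1 / (ε * Real.log 2)) else 1) *
        (p : ℝ) ^ ((a : ℝ) * ε) := by
  have hp' : (2 : ℝ) ≤ (p : ℝ) := by exact_mod_cast hp
  have hlog2 : 0 < Real.log 2 := Real.log_pos (by norm_num)
  have h2pos : (0 : ℝ) ≤ 2 := by norm_num
  have h2a : (2 : ℝ) ^ ((a : ℝ) * ε) ≤ (p : ℝ) ^ ((a : ℝ) * ε) :=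
    Real.rpow_le_rpow h2pos hp' (by positivity)
  split_ifs with h
  · set B := max 1 (1 / (ε * Real.log 2)) with hB
    have hB1 : (1 : ℝ) ≤ B := le_max_left _ _
    have hB2 : 1 / (ε * Real.log 2) ≤ B := le_max_right _ _
    have key : (1 : ℝ) + (a : ℝ) * ε * Real.log 2 ≤ (2 : ℝ) ^ ((a : ℝ) * ε) := by
      rw [Real.rpow_def_of_pos (by norm_num)]
      have := Real.add_one_le_exp (Real.log 2 * ((a : ℝ) * ε))
      nlinarith [this]
    have hBε : 1 ≤ B * (ε * Real.log 2) := by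
      have hpos : 0 < ε * Real.log 2 := by positivity
      calc (1 : ℝ) = (1 / (ε * Real.log 2)) * (ε * Real.log 2) := by
            field_simp
        _ ≤ B * (ε * Real.log 2) := by
            exact mul_le_mul_of_nonneg_right hB2 hpos.le
    have ha0 : (0 : ℝ) ≤ (a : ℝ) := Nat.cast_nonneg a
    have step1 : ((a : ℝ) + 1) ≤ B * (1 + (a : ℝ) * ε * Real.log 2) := by
      nlinarith
    calc ((a : ℝ) + 1) ≤ B * (1 + (a : ℝ) * ε * Real.log 2) := step1
      _ ≤ B * ((2 : ℝ) ^ ((a : ℝ) * ε)) := by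
          exact mul_le_mul_of_nonneg_left key (by linarith)
      _ ≤ B * (p : ℝ) ^ ((a : ℝ) * ε) := by
          exact mul_le_mul_of_nonneg_left h2a (by linarith)
  · push_neg at h
    have h1 : ((a : ℝ) + 1) ≤ (2 : ℝ) ^ a := by
      have := Nat.lt_two_pow_self (n := a)
      exact_mod_cast Nat.succ_le_of_lt this
    have h2 : ((2 : ℝ)) ^ a ≤ ((p : ℝ) ^ ε) ^ a :=
      pow_le_pow_left₀ (by norm_num) h a
    have h3 : ((p : ℝ) ^ ε) ^ a = (p : ℝ) ^ ((a : ℝ) * ε) := by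
      rw [← Real.rpow_natCast ((p : ℝ) ^ ε) a, ← Real.rpow_mul (by positivity),
        mul_comm]
    rw [one_mul]
    calc ((a : ℝ) + 1) ≤ (2 : ℝ) ^ a := h1
      _ ≤ ((p : ℝ) ^ ε) ^ a := h2
      _ = (p : ℝ) ^ ((a : ℝ) * ε) := h3

lemma card_divisors_bound (ε : ℝ) (hε : 0 < ε) :
    ∃ C : ℝ, 1 ≤ C ∧ ∀ n : ℕ, 1 ≤ n → (n.divisors.card : ℝ) ≤ C * (n : ℝ) ^ ε := by
  set B := max 1 (1 / (ε * Real.log 2)) with hBdef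
  have hB1 : (1 : ℝ) ≤ B := le_max_left _ _
  set N := Nat.ceil ((2 : ℝ) ^ (1 / ε)) + 1 with hNdef
  refine ⟨B ^ N, one_le_pow₀ hB1, ?_⟩
  intro n hn
  have hn0 : n ≠ 0 := by omega
  have hnpos : (0 : ℝ) < n := by exact_mod_cast Nat.pos_of_ne_zero hn0
  rw [Nat.card_divisors hn0]
  push_cast
  set S := n.primeFactors with hS
  have hterm : ∀ p ∈ S, ((n.factorization p : ℝ) + 1) ≤
      (if (p : ℝ) ^ ε < 2 then B else 1) * (p : ℝ) ^ ((n.factorization p : ℝ) * ε) := by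
    intro p hpS
    exact prime_factor_bound ε hε p _ (Nat.prime_of_mem_primeFactors hpS).two_le
  have h1 : (∏ p ∈ S, ((n.factorization p : ℝ) + 1)) ≤
      ∏ p ∈ S, ((if (p : ℝ) ^ ε < 2 then B else 1) * (p : ℝ) ^ ((n.factorization p : ℝ) * ε)) := by
    apply Finset.prod_le_prod
    · intro p _; positivity
    · exact hterm
  have h2 : ∏ p ∈ S, ((if (p : ℝ) ^ ε < 2 then B else 1) * (p : ℝ) ^ ((n.factorization p : ℝ) * ε))
      = (∏ p ∈ S, (if (p : ℝ) ^ ε < 2 then B else 1)) *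
        ∏ p ∈ S, (p : ℝ) ^ ((n.factorization p : ℝ) * ε) := Finset.prod_mul_distrib
  -- bound on the constant product
  have hconst : (∏ p ∈ S, (if (p : ℝ) ^ ε < 2 then B else 1)) ≤ B ^ N := by
    rw [← Finset.prod_filter]
    rw [Finset.prod_const]
    have hsub : (S.filter (fun p : ℕ => (p : ℝ) ^ ε < 2)) ⊆ Finset.range N := by
      intro p hp
      simp only [Finset.mem_filter] at hp
      obtain ⟨hpS, hpε⟩ := hp
      have hppos : (0 : ℝ) ≤ (p : ℝ) := Nat.cast_nonneg p
      have : ((p : ℝ) ^ ε) ^ (1 / ε) < (2 : ℝ) ^ (1 / ε) :=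
        Real.rpow_lt_rpow (by positivity) hpε (by positivity)
      rw [← Real.rpow_mul hppos, mul_one_div, div_self hε.ne', Real.rpow_one] at this
      have hple : (p : ℝ) ≤ Nat.ceil ((2 : ℝ) ^ (1 / ε)) := le_trans this.le (Nat.le_ceil _)
      have : p ≤ Nat.ceil ((2 : ℝ) ^ (1 / ε)) := by exact_mod_cast hple
      simp only [Finset.mem_range, hNdef]
      omega
    have hcard : (S.filter (fun p : ℕ => (p : ℝ) ^ ε < 2)).card ≤ N := by
      calc (S.filter (fun p : ℕ => (p : ℝ) ^ ε < 2)).card ≤ (Finset.range N).card :=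
            Finset.card_le_card hsub
        _ = N := Finset.card_range N
    exact pow_le_pow_right₀ hB1 hcard
  -- the rpow product equals n ^ ε
  have hprod : ∏ p ∈ S, (p : ℝ) ^ ((n.factorization p : ℝ) * ε) = (n : ℝ) ^ ε := by
    have heach : ∀ p ∈ S, (p : ℝ) ^ ((n.factorization p : ℝ) * ε)
        = (((p ^ n.factorization p : ℕ) : ℝ)) ^ ε := by
      intro p hpS
      rw [Real.rpow_mul (Nat.cast_nonneg p), Real.rpow_natCast]
      push_cast
      ring_nf
    rw [Finset.prod_congr rfl heach]
    rw [Real.finset_prod_rpow S _ (fun p _ => by positivity) ε]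
    congr 1
    rw [← Nat.cast_prod]
    congr 1
    have := Nat.factorization_prod_pow_eq_self hn0
    rw [Nat.prod_factorization_eq_prod_primeFactors] at this
    exact this
  have hBN : (0 : ℝ) ≤ B ^ N := by positivity
  calc (∏ p ∈ S, ((n.factorization p : ℝ) + 1)) ≤ _ := h1
    _ = (∏ p ∈ S, (if (p : ℝ) ^ ε < 2 then B else 1)) *
        ∏ p ∈ S, (p : ℝ) ^ ((n.factorization p : ℝ) * ε) := h2
    _ ≤ B ^ N * (n : ℝ) ^ ε := by
        rw [hprod]
        exact mul_le_mul_of_nonneg_right hconst (by positivity)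

theorem fstar_upper_bound (ε : ℝ) (hε : 0 < ε) :
    ∃ C : ℝ, ∀ n : ℕ, 1 ≤ n →
      ((∑ m ∈ n.divisors, Nat.gcd m (n / m) : ℕ) : ℝ) ≤ C * (n : ℝ) ^ (1 / 2 + ε) := by
  obtain ⟨C, hC1, hC⟩ := card_divisors_bound ε hε
  refine ⟨C, ?_⟩
  intro n hn
  have hn0 : n ≠ 0 := by omega
  have hnpos : (0 : ℝ) < n := by exact_mod_cast Nat.pos_of_ne_zero hn0
  have hgcd : ∀ m ∈ n.divisors, ((Nat.gcd m (n / m) : ℝ)) ≤ (n : ℝ) ^ (1 / 2 : ℝ) := by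
    intro m hm
    have hmd : m ∣ n := (Nat.mem_divisors.mp hm).1
    have hmpos : 0 < m := Nat.pos_of_mem_divisors hm
    have hdpos : 0 < n / m := Nat.div_pos (Nat.le_of_dvd (Nat.pos_of_ne_zero hn0) hmd) hmpos
    have h1 : Nat.gcd m (n / m) ≤ m := Nat.gcd_le_left _ hmpos
    have h2 : Nat.gcd m (n / m) ≤ n / m := Nat.gcd_le_right _ hdpos
    have h3 : Nat.gcd m (n / m) * Nat.gcd m (n / m) ≤ n := by
      calc Nat.gcd m (n / m) * Nat.gcd m (n / m) ≤ m * (n / m) :=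
            Nat.mul_le_mul h1 h2
        _ = n := Nat.mul_div_cancel' hmd
    rw [← Real.sqrt_eq_rpow]
    refine (Real.le_sqrt (Nat.cast_nonneg _) (Nat.cast_nonneg _)).mpr ?_
    have : ((Nat.gcd m (n / m) * Nat.gcd m (n / m) : ℕ) : ℝ) ≤ (n : ℝ) := by exact_mod_cast h3
    push_cast at this
    nlinarith [this]
  have hsum : ((∑ m ∈ n.divisors, Nat.gcd m (n / m) : ℕ) : ℝ) ≤
      (n.divisors.card : ℝ) * (n : ℝ) ^ (1 / 2 : ℝ) := by
    push_cast
    calc (∑ m ∈ n.divisors, (Nat.gcd m (n / m) : ℝ)) ≤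
        n.divisors.card • ((n : ℝ) ^ (1 / 2 : ℝ)) :=
          Finset.sum_le_card_nsmul _ _ _ hgcd
      _ = (n.divisors.card : ℝ) * (n : ℝ) ^ (1 / 2 : ℝ) := by
          rw [nsmul_eq_mul]
  have hrpow : (0 : ℝ) ≤ (n : ℝ) ^ (1 / 2 : ℝ) := by positivity
  calc ((∑ m ∈ n.divisors, Nat.gcd m (n / m) : ℕ) : ℝ)
      ≤ (n.divisors.card : ℝ) * (n : ℝ) ^ (1 / 2 : ℝ) := hsum
    _ ≤ (C * (n : ℝ) ^ ε) * (n : ℝ) ^ (1 / 2 : ℝ) :=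
        mul_le_mul_of_nonneg_right (hC n hn) hrpow
    _ = C * (n : ℝ) ^ (1 / 2 + ε) := by
        rw [Real.rpow_add hnpos, mul_assoc, mul_comm ((n:ℝ) ^ (1/2 : ℝ))]
end

section
/- Let ĥ(n) := ∑_{m₁ m₂ m₃² = n} m₃. Then for every ε > 0 and every fixed β > −3/2, the sum ∑_{n ≤ X} n^β ĥ(n)² = O(X^{3/2 + β + ε}) as X → ∞. -/
open Finset


lemma sum_rpow_le (γ : ℝ) (hγ : -1 < γ) :
    ∃ C : ℝ, 0 ≤ C ∧ ∀ Y : ℕ, ∑ k ∈ Finset.Icc 1 Y, (k : ℝ) ^ γ ≤ C * (Y : ℝ) ^ (1 + γ) := by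
  rcases le_or_gt 0 γ with h0 | h0
  · refine ⟨1, zero_le_one, fun Y => ?_⟩
    calc ∑ k ∈ Finset.Icc 1 Y, (k : ℝ) ^ γ ≤ ∑ _k ∈ Finset.Icc 1 Y, (Y : ℝ) ^ γ := by
          refine Finset.sum_le_sum fun k hk => ?_
          have hk' := (Finset.mem_Icc.1 hk).2
          exact Real.rpow_le_rpow (Nat.cast_nonneg k) (by exact_mod_cast hk') h0
      _ = (Finset.Icc 1 Y).card * (Y : ℝ) ^ γ := by rw [Finset.sum_const, nsmul_eq_mul]
      _ ≤ (Y : ℝ) * (Y : ℝ) ^ γ := by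
          have : (Finset.Icc 1 Y).card ≤ Y := by simp [Nat.card_Icc]
          have h2 : (0:ℝ) ≤ (Y:ℝ) ^ γ := Real.rpow_nonneg (Nat.cast_nonneg Y) γ
          exact mul_le_mul_of_nonneg_right (by exact_mod_cast this) h2
      _ = 1 * (Y : ℝ) ^ (1 + γ) := by
          have hne : (1:ℝ) + γ ≠ 0 := ne_of_gt (by linarith)
          rw [one_mul, Real.rpow_add' (Nat.cast_nonneg Y) hne, Real.rpow_one]
  · have h1γ : (0:ℝ) < 1 + γ := by linarith
    refine ⟨1 + 1 / (1 + γ), by positivity, fun Y => ?_⟩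
    rcases Nat.eq_zero_or_pos Y with rfl | hY
    · simp [Real.zero_rpow (by positivity : (1:ℝ) + γ ≠ 0)]
    have hYR : (1:ℝ) ≤ (Y:ℝ) := by exact_mod_cast hY
    have hpow1 : (1:ℝ) ≤ (Y:ℝ) ^ (1 + γ) := Real.one_le_rpow hYR h1γ.le
    -- split off k = 1
    have hsplit : Finset.Icc 1 Y = insert 1 (Finset.Icc 2 Y) := by
      ext k; simp only [Finset.mem_Icc, Finset.mem_insert]; omega
    have hnotmem : (1:ℕ) ∉ Finset.Icc 2 Y := by simp
    rw [hsplit, Finset.sum_insert hnotmem]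
    have htail : ∑ k ∈ Finset.Icc 2 Y, (k : ℝ) ^ γ ≤ (1 / (1 + γ)) * (Y : ℝ) ^ (1 + γ) := by
      have hmap : ∑ k ∈ Finset.Icc 2 Y, (k : ℝ) ^ γ
          = ∑ i ∈ Finset.Ico 1 Y, (((i + 1 : ℕ) : ℝ)) ^ γ := by
        rw [← Finset.Ico_add_one_right_eq_Icc]
        rw [← Finset.map_add_right_Ico 1 Y 1]
        rw [Finset.sum_map]
        rfl
      have hanti : AntitoneOn (fun x : ℝ => x ^ γ) (Set.Icc (1:ℕ) ((Y:ℕ):ℝ)) := by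
        intro x hx y hy hxy
        exact Real.rpow_le_rpow_of_nonpos (lt_of_lt_of_le one_pos (by simpa using hx.1)) hxy h0.le
      have := AntitoneOn.sum_le_integral_Ico hY (f := fun x : ℝ => x ^ γ) (by exact_mod_cast hanti)
      rw [hmap]
      refine le_trans this ?_
      rw [integral_rpow (Or.inl hγ)]
      have hq : γ + 1 = 1 + γ := by ring
      rw [hq]
      push_cast
      rw [Real.one_rpow, div_le_iff₀ h1γ]
      have h2 : (0:ℝ) ≤ (Y:ℝ) ^ (1 + γ) := Real.rpow_nonneg (Nat.cast_nonneg Y) _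
      field_simp
      linarith
    have h1 : ((1:ℕ):ℝ) ^ γ = 1 := by norm_num
    rw [h1]
    calc 1 + ∑ k ∈ Finset.Icc 2 Y, (k:ℝ) ^ γ
        ≤ (Y:ℝ) ^ (1+γ) + (1/(1+γ)) * (Y:ℝ)^(1+γ) := by gcongr
      _ = (1 + 1/(1+γ)) * (Y:ℝ)^(1+γ) := by ring

lemma sum_rpow_le' (γ : ℝ) (hγ : γ < -1) :
    ∃ C : ℝ, 0 ≤ C ∧ ∀ Y : ℕ, ∑ k ∈ Finset.Icc 1 Y, (k : ℝ) ^ γ ≤ C := by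
  have hsum : Summable (fun n : ℕ => (n : ℝ) ^ γ) := Real.summable_nat_rpow.2 hγ
  refine ⟨∑' n : ℕ, (n : ℝ) ^ γ, tsum_nonneg fun n => Real.rpow_nonneg (Nat.cast_nonneg n) γ, fun Y => ?_⟩
  exact Summable.sum_le_tsum _ (fun n _ => Real.rpow_nonneg (Nat.cast_nonneg n) γ) hsum


lemma card_divisors_le_rpow (δ : ℝ) (hδ : 0 < δ) :
    ∃ C : ℝ, 1 ≤ C ∧ ∀ n : ℕ, 1 ≤ n → (n.divisors.card : ℝ) ≤ C * (n : ℝ) ^ δ := by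
  set L := Real.log 2 with hLdef
  have hL : 0 < L := Real.log_pos one_lt_two
  set B : ℝ := 1 + 1 / (δ * L) with hBdef
  have hB : 1 ≤ B := by rw [hBdef]; have : 0 < 1 / (δ * L) := by positivity
                        linarith
  have hB0 : 0 ≤ B := by linarith
  set K : ℕ := ⌈(2:ℝ) ^ (1/δ)⌉₊ with hKdef
  refine ⟨B ^ K, one_le_pow₀ hB, fun n hn => ?_⟩
  have hn0 : n ≠ 0 := by omega
  -- expression for card
  have hcard : (n.divisors.card : ℝ) = ∏ p ∈ n.primeFactors, ((n.factorization p : ℝ) + 1) := by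
    rw [Nat.card_divisors hn0]
    push_cast
    rfl
  -- expression for n^δ
  have hnpow : (n : ℝ) ^ δ = ∏ p ∈ n.primeFactors, (p : ℝ) ^ ((n.factorization p : ℝ) * δ) := by
    have h1 : (n : ℝ) = ∏ p ∈ n.primeFactors, (p : ℝ) ^ (n.factorization p : ℕ) := by
      conv_lhs => rw [← Nat.factorization_prod_pow_eq_self hn0]
      push_cast
      rfl
    rw [h1, ← Real.finset_prod_rpow _ _ (fun p _ => by positivity) δ]
    refine Finset.prod_congr rfl fun p hp => ?_
    rw [← Real.rpow_natCast (p : ℝ) (n.factorization p), ← Real.rpow_mul (Nat.cast_nonneg p)]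
  rw [hcard, hnpow]
  -- factorwise bound
  have hfac : ∀ p ∈ n.primeFactors,
      (n.factorization p : ℝ) + 1
        ≤ (if p ≤ K then B else 1) * (p : ℝ) ^ ((n.factorization p : ℝ) * δ) := by
    intro p hp
    have hpp : p.Prime := Nat.prime_of_mem_primeFactors hp
    have hp2 : (2:ℝ) ≤ (p:ℝ) := by exact_mod_cast hpp.two_le
    have hp0 : (0:ℝ) < (p:ℝ) := by linarith
    set e : ℕ := n.factorization p with hedef
    by_cases hpK : p ≤ K
    · simp only [hpK, if_true]
      have h2e : (e : ℝ) + 1 ≤ B * (2 : ℝ) ^ ((e : ℝ) * δ) := by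
        have hexp : (2 : ℝ) ^ ((e : ℝ) * δ) = Real.exp (((e : ℝ) * δ) * L) := by
          rw [Real.rpow_def_of_pos (by norm_num : (0:ℝ) < 2), hLdef, mul_comm]
        have hge : ((e : ℝ) * δ) * L + 1 ≤ Real.exp (((e : ℝ) * δ) * L) :=
          Real.add_one_le_exp _
        have he0 : (0:ℝ) ≤ (e:ℝ) := Nat.cast_nonneg e
        rw [hexp, hBdef]
        have hdL : 0 < δ * L := by positivity
        have key : (e : ℝ) + 1 ≤ (1 + 1/(δ*L)) * (((e : ℝ) * δ) * L + 1) := by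
          have hid : (1/(δ*L)) * ((e:ℝ)*δ*L) = e := by field_simp
          have hexpand : (1 + 1/(δ*L)) * ((e:ℝ)*δ*L + 1)
              = (e:ℝ)*δ*L + 1 + (1/(δ*L))*((e:ℝ)*δ*L) + 1/(δ*L) := by ring
          rw [hexpand, hid]
          have h1 : (0:ℝ) ≤ (e:ℝ)*δ*L := by positivity
          have h2 : (0:ℝ) < 1/(δ*L) := by positivity
          linarith
        refine key.trans ?_
        have hBpos : (0:ℝ) ≤ 1 + 1/(δ*L) := by positivity
        exact mul_le_mul_of_nonneg_left hge hBpos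
      refine h2e.trans ?_
      have : (2:ℝ) ^ ((e : ℝ) * δ) ≤ (p:ℝ) ^ ((e : ℝ) * δ) :=
        Real.rpow_le_rpow (by norm_num) hp2 (by positivity)
      exact mul_le_mul_of_nonneg_left this hB0
    · simp only [hpK, if_false, one_mul]
      have hKp : (K : ℝ) < (p : ℝ) := by exact_mod_cast Nat.lt_of_not_le hpK
      have h2p : (2:ℝ) ^ (1/δ) ≤ (p:ℝ) := le_trans (Nat.le_ceil _) (le_of_lt hKp)
      have hpd : (2:ℝ) ≤ (p:ℝ) ^ δ := by
        have := Real.rpow_le_rpow (by positivity) h2p (le_of_lt hδ)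
        rwa [← Real.rpow_mul (by norm_num : (0:ℝ) ≤ 2), one_div, inv_mul_cancel₀ (ne_of_gt hδ),
          Real.rpow_one] at this
      have hpe : (p:ℝ) ^ ((e : ℝ) * δ) = ((p:ℝ) ^ δ) ^ e := by
        rw [← Real.rpow_natCast ((p:ℝ) ^ δ) e, ← Real.rpow_mul (le_of_lt hp0), mul_comm]
      rw [hpe]
      have h2e : (2:ℝ) ^ e ≤ ((p:ℝ) ^ δ) ^ e := pow_le_pow_left₀ (by norm_num) hpd e
      refine le_trans ?_ h2e
      have := Nat.lt_two_pow_self (n := e)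
      have : (e : ℝ) + 1 ≤ ((2:ℕ) ^ e : ℕ) := by exact_mod_cast this
      push_cast at this
      linarith
  have hprod : ∏ p ∈ n.primeFactors, ((n.factorization p : ℝ) + 1)
      ≤ ∏ p ∈ n.primeFactors,
          ((if p ≤ K then B else 1) * (p : ℝ) ^ ((n.factorization p : ℝ) * δ)) :=
    Finset.prod_le_prod (fun p _ => by positivity) hfac
  refine hprod.trans ?_
  rw [Finset.prod_mul_distrib]
  have hif : ∏ p ∈ n.primeFactors, (if p ≤ K then B else 1) ≤ B ^ K := by
    rw [Finset.prod_ite, Finset.prod_const, Finset.prod_const, one_pow, mul_one]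
    refine le_trans (pow_le_pow_right₀ hB ?_) (le_refl (B ^ K))
    calc (n.primeFactors.filter (fun p => p ≤ K)).card
        ≤ (Finset.Icc 1 K).card := by
          refine Finset.card_le_card fun p hp => ?_
          simp only [Finset.mem_filter] at hp
          have := (Nat.prime_of_mem_primeFactors hp.1).two_le
          simp only [Finset.mem_Icc]
          omega
      _ = K := by simp [Nat.card_Icc]
  refine mul_le_mul_of_nonneg_right hif ?_
  exact Finset.prod_nonneg fun p _ => Real.rpow_nonneg (Nat.cast_nonneg p) _


/-- `ĥ(n) = ∑_{m₁ m₂ m₃² = n} m₃`, summed over triples of positive integers. -/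
def hHat (n : ℕ) : ℕ :=
  ∑ t ∈ (Finset.Icc 1 n ×ˢ Finset.Icc 1 n ×ˢ Finset.Icc 1 n).filter
      (fun t => t.1 * t.2.1 * t.2.2 ^ 2 = n), t.2.2

lemma hHat_le (n : ℕ) (hn : 1 ≤ n) :
    hHat n ≤ n.divisors.card * ∑ m ∈ (Finset.Icc 1 n).filter (fun m => m ^ 2 ∣ n), m := by
  classical
  set T := (Finset.Icc 1 n ×ˢ Finset.Icc 1 n ×ˢ Finset.Icc 1 n).filter
      (fun t => t.1 * t.2.1 * t.2.2 ^ 2 = n) with hT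
  set S := (Finset.Icc 1 n).filter (fun m => m ^ 2 ∣ n) with hS
  set φ : ℕ × ℕ × ℕ → ℕ × ℕ := fun t => (t.1, t.2.2) with hφ
  have hinj : ∀ t ∈ T, ∀ t' ∈ T, φ t = φ t' → t = t' := by
    rintro ⟨a, b, c⟩ ht ⟨a', b', c'⟩ ht' heq
    simp only [hφ, Prod.mk.injEq] at heq
    obtain ⟨rfl, rfl⟩ := heq
    simp only [hT, Finset.mem_filter, Finset.mem_product, Finset.mem_Icc] at ht ht'
    have h1 := ht.2
    have h2 := ht'.2
    have : b = b' := by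
      have ha : 0 < a := ht.1.1.1
      have hc : 0 < c := ht.1.2.2.1
      have := h1.trans h2.symm
      have hcc : 0 < c ^ 2 := by positivity
      nlinarith [Nat.eq_of_mul_eq_mul_left ha (by nlinarith : a * (b * c ^ 2) = a * (b' * c ^ 2))]
    simp [this]
  have himg : T.image φ ⊆ n.divisors ×ˢ S := by
    intro p hp
    simp only [Finset.mem_image] at hp
    obtain ⟨⟨a, b, c⟩, ht, rfl⟩ := hp
    simp only [hT, Finset.mem_filter, Finset.mem_product, Finset.mem_Icc] at ht
    simp only [hφ, Finset.mem_product, Nat.mem_divisors, hS, Finset.mem_filter, Finset.mem_Icc]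
    refine ⟨⟨⟨b * c ^ 2, by rw [← ht.2]; ring⟩, by omega⟩, ⟨ht.1.2.2.1, ht.1.2.2.2⟩, ⟨a * b, by rw [← ht.2]; ring⟩⟩
  calc hHat n = ∑ p ∈ T.image φ, p.2 := by
        rw [Finset.sum_image hinj]
        rfl
    _ ≤ ∑ p ∈ n.divisors ×ˢ S, p.2 := Finset.sum_le_sum_of_subset himg
    _ = n.divisors.card * ∑ m ∈ S, m := by
        rw [Finset.sum_product]
        simp only []
        rw [Finset.sum_const, smul_eq_mul]

lemma hHat_sq_le (n : ℕ) (hn : 1 ≤ n) :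
    ((hHat n : ℝ)) ^ 2 ≤ (n.divisors.card : ℝ) ^ 3
      * ∑ m ∈ (Finset.Icc 1 n).filter (fun m => m ^ 2 ∣ n), (m : ℝ) ^ 2 := by
  classical
  set S := (Finset.Icc 1 n).filter (fun m => m ^ 2 ∣ n) with hS
  have hcardS : S.card ≤ n.divisors.card := by
    refine Finset.card_le_card fun m hm => ?_
    simp only [hS, Finset.mem_filter, Finset.mem_Icc] at hm
    exact Nat.mem_divisors.2 ⟨dvd_trans (dvd_pow_self m (by norm_num)) hm.2, by omega⟩
  have h1 : (hHat n : ℝ) ≤ (n.divisors.card : ℝ) * ∑ m ∈ S, (m : ℝ) := by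
    have := hHat_le n hn
    calc (hHat n : ℝ) ≤ ((n.divisors.card * ∑ m ∈ S, m : ℕ) : ℝ) := by exact_mod_cast this
      _ = (n.divisors.card : ℝ) * ∑ m ∈ S, (m : ℝ) := by push_cast; ring
  have h2 : (∑ m ∈ S, (m : ℝ)) ^ 2 ≤ (S.card : ℝ) * ∑ m ∈ S, (m : ℝ) ^ 2 :=
    sq_sum_le_card_mul_sum_sq
  have hd0 : (0:ℝ) ≤ (n.divisors.card : ℝ) := Nat.cast_nonneg _
  have hs0 : (0:ℝ) ≤ ∑ m ∈ S, (m : ℝ) := Finset.sum_nonneg fun m _ => Nat.cast_nonneg m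
  have ht0 : (0:ℝ) ≤ ∑ m ∈ S, (m : ℝ) ^ 2 := Finset.sum_nonneg fun m _ => by positivity
  calc ((hHat n : ℝ)) ^ 2 ≤ ((n.divisors.card : ℝ) * ∑ m ∈ S, (m : ℝ)) ^ 2 := by
        have h0 : (0:ℝ) ≤ (hHat n : ℝ) := Nat.cast_nonneg _
        exact pow_le_pow_left₀ h0 h1 2
    _ = (n.divisors.card : ℝ) ^ 2 * (∑ m ∈ S, (m : ℝ)) ^ 2 := by ring
    _ ≤ (n.divisors.card : ℝ) ^ 2 * ((S.card : ℝ) * ∑ m ∈ S, (m : ℝ) ^ 2) := by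
        exact mul_le_mul_of_nonneg_left h2 (by positivity)
    _ ≤ (n.divisors.card : ℝ) ^ 2 * ((n.divisors.card : ℝ) * ∑ m ∈ S, (m : ℝ) ^ 2) := by
        have : (S.card : ℝ) ≤ (n.divisors.card : ℝ) := by exact_mod_cast hcardS
        exact mul_le_mul_of_nonneg_left (mul_le_mul_of_nonneg_right this ht0) (by positivity)
    _ = (n.divisors.card : ℝ) ^ 3 * ∑ m ∈ S, (m : ℝ) ^ 2 := by ring


lemma sum_reindex (X : ℕ) (g : ℕ → ℕ → ℝ) :
    ∑ n ∈ Finset.Icc 1 X, ∑ m ∈ (Finset.Icc 1 n).filter (fun m => m ^ 2 ∣ n), g n m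
      = ∑ m ∈ Finset.Icc 1 (Nat.sqrt X), ∑ k ∈ Finset.Icc 1 (X / m ^ 2), g (m ^ 2 * k) m := by
  classical
  rw [Finset.sum_sigma', Finset.sum_sigma']
  refine Finset.sum_nbij' (fun p => ⟨p.2, p.1 / p.2 ^ 2⟩) (fun q => ⟨q.1 ^ 2 * q.2, q.1⟩)
    ?_ ?_ ?_ ?_ ?_
  · rintro ⟨n, m⟩ hp
    simp only [Finset.mem_sigma, Finset.mem_Icc, Finset.mem_filter] at hp ⊢
    obtain ⟨⟨h1n, hnX⟩, ⟨h1m, hmn⟩, hdvd⟩ := hp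
    have hm0 : 0 < m := h1m
    have hm2 : 0 < m ^ 2 := by positivity
    have hmn2 : m ^ 2 ≤ n := Nat.le_of_dvd (by omega) hdvd
    refine ⟨⟨h1m, ?_⟩, ?_, ?_⟩
    · rw [Nat.le_sqrt]
      calc m * m = m ^ 2 := by ring
        _ ≤ n := hmn2
        _ ≤ X := hnX
    · exact Nat.one_le_div_iff hm2 |>.2 hmn2
    · exact Nat.div_le_div_right hnX
  · rintro ⟨m, k⟩ hq
    simp only [Finset.mem_sigma, Finset.mem_Icc, Finset.mem_filter] at hq ⊢
    obtain ⟨⟨h1m, hms⟩, h1k, hk⟩ := hq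
    have hm0 : 0 < m := h1m
    have hm2 : 0 < m ^ 2 := by positivity
    have hmk : m ^ 2 * k ≤ X := by
      rw [Nat.le_div_iff_mul_le hm2] at hk
      calc m ^ 2 * k = k * m ^ 2 := by ring
        _ ≤ X := hk
    refine ⟨⟨?_, hmk⟩, ⟨?_, ?_⟩, ⟨k, rfl⟩⟩
    · exact Nat.one_le_iff_ne_zero.2 (by positivity)
    · exact h1m
    · calc m = m * 1 := by ring
        _ ≤ m ^ 2 * k := by
            have : m * 1 ≤ m * m := Nat.mul_le_mul_left m h1m
            calc m * 1 ≤ m * m := this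
              _ = m ^ 2 * 1 := by ring
              _ ≤ m ^ 2 * k := Nat.mul_le_mul_left _ h1k
  · rintro ⟨n, m⟩ hp
    simp only [Finset.mem_sigma, Finset.mem_Icc, Finset.mem_filter] at hp
    obtain ⟨⟨h1n, hnX⟩, ⟨h1m, hmn⟩, hdvd⟩ := hp
    show (⟨m ^ 2 * (n / m ^ 2), m⟩ : (_ : ℕ) × ℕ) = ⟨n, m⟩
    rw [Nat.mul_div_cancel' hdvd]
  · rintro ⟨m, k⟩ hq
    simp only [Finset.mem_sigma, Finset.mem_Icc] at hq
    obtain ⟨⟨h1m, hms⟩, h1k, hk⟩ := hq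
    have hm0 : 0 < m ^ 2 := by positivity
    show (⟨m, m ^ 2 * k / m ^ 2⟩ : (_ : ℕ) × ℕ) = ⟨m, k⟩
    rw [Nat.mul_div_cancel_left k hm0]
  · rintro ⟨n, m⟩ hp
    simp only [Finset.mem_sigma, Finset.mem_Icc, Finset.mem_filter] at hp
    obtain ⟨⟨h1n, hnX⟩, ⟨h1m, hmn⟩, hdvd⟩ := hp
    simp only []
    rw [Nat.mul_div_cancel' hdvd]


theorem hHat_square_sum_bound (ε β : ℝ) (hε : 0 < ε) (hβ : -(3 / 2) < β) :
    ∃ C : ℝ, ∀ X : ℕ, 1 ≤ X →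
      ∑ n ∈ Finset.Icc 1 X, (n : ℝ) ^ β * (hHat n : ℝ) ^ 2
        ≤ C * (X : ℝ) ^ (3 / 2 + β + ε) := by
  classical
  obtain ⟨δ, hδ0, hδε, hγcase⟩ :
      ∃ δ : ℝ, 0 < δ ∧ 3 * δ ≤ ε ∧ (β + 3 * δ < -1 ∨ -1 < β + 3 * δ) := by
    rcases lt_or_ge β (-1) with hb | hb
    · refine ⟨min (ε/3) ((-1 - β)/6), lt_min (by linarith) (by linarith), ?_, Or.inl ?_⟩
      · have := min_le_left (ε/3) ((-1 - β)/6); linarith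
      · have := min_le_right (ε/3) ((-1 - β)/6); linarith
    · exact ⟨ε/3, by linarith, by linarith, Or.inr (by linarith)⟩
  set γ := β + 3 * δ with hγdef
  have hγ32 : -(3/2 : ℝ) < γ := by simp only [hγdef]; linarith
  obtain ⟨D, hD1, hD⟩ := card_divisors_le_rpow δ hδ0
  have hD0 : (0:ℝ) ≤ D := by linarith
  -- sqrt bound helper
  have hsqrt : ∀ X : ℕ, ((Nat.sqrt X : ℕ) : ℝ) ≤ (X : ℝ) ^ ((1:ℝ)/2) := by
    intro X
    have h1 : ((Nat.sqrt X : ℕ) : ℝ) ^ 2 ≤ (X : ℝ) := by exact_mod_cast Nat.sqrt_le' X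
    have h2 : ((Nat.sqrt X : ℕ) : ℝ) ≤ Real.sqrt (X : ℝ) :=
      (Real.le_sqrt (Nat.cast_nonneg _) (Nat.cast_nonneg _)).2 h1
    rwa [Real.sqrt_eq_rpow] at h2
  -- square-power combination helper
  have hsq : ∀ m : ℕ, 1 ≤ m → ((m:ℝ)^2) ^ (1 + γ) = (m:ℝ)^2 * (m:ℝ)^((2:ℝ)*γ) := by
    intro m hm
    have hm0 : (0:ℝ) < (m:ℝ) := by exact_mod_cast hm
    have h1 : ((m:ℝ)^2) ^ (1+γ) = (m:ℝ)^((2:ℝ)*(1+γ)) := by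
      rw [← Real.rpow_natCast (m:ℝ) 2, ← Real.rpow_mul hm0.le]
      norm_num
    have h2 : ((m:ℝ)^(2:ℝ)) = (m:ℝ)^(2:ℕ) := by
      rw [show ((2:ℝ)) = ((2:ℕ):ℝ) from by norm_num, Real.rpow_natCast]
    rw [h1, show (2:ℝ)*(1+γ) = 2 + 2*γ from by ring, Real.rpow_add hm0, h2]
  -- key bound on the reindexed sum
  have key : ∃ C2 : ℝ, 0 ≤ C2 ∧ ∀ X : ℕ, 1 ≤ X →
      ∑ m ∈ Finset.Icc 1 (Nat.sqrt X),
          (m:ℝ)^((2:ℝ)*γ) * (m:ℝ)^2 * (∑ k ∈ Finset.Icc 1 (X / m ^ 2), (k:ℝ)^γ)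
        ≤ C2 * (X:ℝ) ^ (3/2 + γ) := by
    rcases hγcase with hc | hc
    · -- γ < -1
      obtain ⟨CB, hCB0, hCB⟩ := sum_rpow_le' γ hc
      obtain ⟨CA, hCA0, hCA⟩ := sum_rpow_le (2 + 2*γ) (by linarith)
      refine ⟨CA * CB, by positivity, fun X hX => ?_⟩
      have hstep : ∑ m ∈ Finset.Icc 1 (Nat.sqrt X),
          (m:ℝ)^((2:ℝ)*γ) * (m:ℝ)^2 * (∑ k ∈ Finset.Icc 1 (X / m ^ 2), (k:ℝ)^γ)
          ≤ ∑ m ∈ Finset.Icc 1 (Nat.sqrt X), (m:ℝ)^(2 + 2*γ) * CB := by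
        refine Finset.sum_le_sum fun m hm => ?_
        have hm1 : 1 ≤ m := (Finset.mem_Icc.1 hm).1
        have hm0 : (0:ℝ) < (m:ℝ) := by exact_mod_cast hm1
        have hcomb : (m:ℝ)^((2:ℝ)*γ) * (m:ℝ)^2 = (m:ℝ)^(2 + 2*γ) := by
          have h2 : ((m:ℝ)^(2:ℝ)) = (m:ℝ)^(2:ℕ) := by
            rw [show ((2:ℝ)) = ((2:ℕ):ℝ) from by norm_num, Real.rpow_natCast]
          rw [show (2 + 2*γ:ℝ) = 2*γ + 2 from by ring, Real.rpow_add hm0, h2]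
        rw [hcomb]
        exact mul_le_mul_of_nonneg_left (hCB _) (Real.rpow_nonneg hm0.le _)
      refine hstep.trans ?_
      rw [← Finset.sum_mul]
      have h2 : ∑ m ∈ Finset.Icc 1 (Nat.sqrt X), (m:ℝ)^(2 + 2*γ)
          ≤ CA * ((Nat.sqrt X : ℕ):ℝ) ^ (1 + (2 + 2*γ)) := hCA (Nat.sqrt X)
      have h3 : ((Nat.sqrt X : ℕ):ℝ) ^ (1 + (2 + 2*γ)) ≤ (X:ℝ) ^ (3/2 + γ) := by
        have hexp : (0:ℝ) ≤ 1 + (2 + 2*γ) := by linarith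
        have := Real.rpow_le_rpow (Nat.cast_nonneg _) (hsqrt X) hexp
        refine this.trans ?_
        rw [← Real.rpow_mul (Nat.cast_nonneg X)]
        rw [show (1:ℝ)/2 * (1 + (2 + 2*γ)) = 3/2 + γ from by ring]
      calc (∑ m ∈ Finset.Icc 1 (Nat.sqrt X), (m:ℝ)^(2 + 2*γ)) * CB
          ≤ (CA * ((Nat.sqrt X : ℕ):ℝ) ^ (1 + (2 + 2*γ))) * CB :=
            mul_le_mul_of_nonneg_right h2 hCB0
        _ ≤ (CA * (X:ℝ) ^ (3/2 + γ)) * CB := by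
            refine mul_le_mul_of_nonneg_right (mul_le_mul_of_nonneg_left h3 hCA0) hCB0
        _ = CA * CB * (X:ℝ) ^ (3/2 + γ) := by ring
    · -- γ > -1
      obtain ⟨CA, hCA0, hCA⟩ := sum_rpow_le γ hc
      refine ⟨CA, hCA0, fun X hX => ?_⟩
      have hX0 : (0:ℝ) < (X:ℝ) := by exact_mod_cast hX
      have hstep : ∑ m ∈ Finset.Icc 1 (Nat.sqrt X),
          (m:ℝ)^((2:ℝ)*γ) * (m:ℝ)^2 * (∑ k ∈ Finset.Icc 1 (X / m ^ 2), (k:ℝ)^γ)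
          ≤ ∑ m ∈ Finset.Icc 1 (Nat.sqrt X), CA * (X:ℝ)^(1 + γ) := by
        refine Finset.sum_le_sum fun m hm => ?_
        have hm1 : 1 ≤ m := (Finset.mem_Icc.1 hm).1
        have hm0 : (0:ℝ) < (m:ℝ) := by exact_mod_cast hm1
        have hHle : (∑ k ∈ Finset.Icc 1 (X / m ^ 2), (k:ℝ)^γ)
            ≤ CA * ((X:ℝ)/(m:ℝ)^2) ^ (1 + γ) := by
          refine (hCA (X / m ^ 2)).trans ?_
          have hcast : (((X / m ^ 2 : ℕ)):ℝ) ≤ (X:ℝ)/(m:ℝ)^2 := by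
            have := Nat.cast_div_le (m := X) (n := m ^ 2) (α := ℝ)
            push_cast at this
            exact this
          exact mul_le_mul_of_nonneg_left
            (Real.rpow_le_rpow (Nat.cast_nonneg _) hcast (by linarith)) hCA0
        have hfac0 : (0:ℝ) ≤ (m:ℝ)^((2:ℝ)*γ) * (m:ℝ)^2 := by positivity
        refine (mul_le_mul_of_nonneg_left hHle hfac0).trans ?_
        have hdiv : ((X:ℝ)/(m:ℝ)^2)^(1 + γ) = (X:ℝ)^(1+γ) / ((m:ℝ)^2)^(1+γ) :=
          Real.div_rpow (Nat.cast_nonneg X) (by positivity : (0:ℝ) ≤ (m:ℝ)^2) (1+γ)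
        rw [hdiv, hsq m hm1]
        have hm2 : ((m:ℝ)^2) ≠ 0 := by positivity
        have hmr : (m:ℝ)^((2:ℝ)*γ) ≠ 0 := by positivity
        have heq : (m:ℝ)^((2:ℝ)*γ) * (m:ℝ)^2 * (CA * ((X:ℝ)^(1+γ) / ((m:ℝ)^2 * (m:ℝ)^((2:ℝ)*γ))))
            = CA * (X:ℝ)^(1+γ) := by
          field_simp
        exact heq.le
      refine hstep.trans ?_
      rw [Finset.sum_const, nsmul_eq_mul]
      have hcard : ((Finset.Icc 1 (Nat.sqrt X)).card : ℝ) ≤ (X:ℝ)^((1:ℝ)/2) := by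
        rw [Nat.card_Icc]
        simpa using hsqrt X
      calc ((Finset.Icc 1 (Nat.sqrt X)).card : ℝ) * (CA * (X:ℝ)^(1 + γ))
          ≤ (X:ℝ)^((1:ℝ)/2) * (CA * (X:ℝ)^(1 + γ)) :=
            mul_le_mul_of_nonneg_right hcard (by positivity)
        _ = CA * (X:ℝ)^(3/2 + γ) := by
            have hXadd : (X:ℝ)^((1:ℝ)/2) * (X:ℝ)^(1+γ) = (X:ℝ)^(3/2+γ) := by
              rw [← Real.rpow_add hX0, show (1:ℝ)/2 + (1+γ) = 3/2+γ from by ring]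
            rw [mul_left_comm, hXadd]
  obtain ⟨C2, hC20, hC2⟩ := key
  refine ⟨D^3 * C2, fun X hX => ?_⟩
  have hX0 : (0:ℝ) < (X:ℝ) := by exact_mod_cast hX
  have hX1 : (1:ℝ) ≤ (X:ℝ) := by exact_mod_cast hX
  have step1 : ∑ n ∈ Finset.Icc 1 X, (n : ℝ) ^ β * (hHat n : ℝ) ^ 2
      ≤ D^3 * ∑ n ∈ Finset.Icc 1 X,
          ∑ m ∈ (Finset.Icc 1 n).filter (fun m => m ^ 2 ∣ n), (n:ℝ)^γ * (m:ℝ)^2 := by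
    rw [Finset.mul_sum]
    refine Finset.sum_le_sum fun n hn => ?_
    have hn1 : 1 ≤ n := (Finset.mem_Icc.1 hn).1
    have hn0 : (0:ℝ) < (n:ℝ) := by exact_mod_cast hn1
    have h1 := hHat_sq_le n hn1
    have h2 : ((n.divisors.card : ℝ))^3 ≤ (D * (n:ℝ)^δ)^3 :=
      pow_le_pow_left₀ (Nat.cast_nonneg _) (hD n hn1) 3
    have ht0 : (0:ℝ) ≤ ∑ m ∈ (Finset.Icc 1 n).filter (fun m => m ^ 2 ∣ n), (m:ℝ)^2 :=
      Finset.sum_nonneg fun m _ => by positivity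
    have hβ0 : (0:ℝ) ≤ (n:ℝ)^β := Real.rpow_nonneg hn0.le β
    have hchain : (n : ℝ) ^ β * (hHat n : ℝ) ^ 2
        ≤ (n:ℝ)^β * ((D * (n:ℝ)^δ)^3
            * ∑ m ∈ (Finset.Icc 1 n).filter (fun m => m ^ 2 ∣ n), (m:ℝ)^2) :=
      mul_le_mul_of_nonneg_left
        (h1.trans (mul_le_mul_of_nonneg_right h2 ht0)) hβ0
    refine hchain.trans (le_of_eq ?_)
    have hd3 : ((n:ℝ)^δ)^3 = (n:ℝ)^(3*δ) := by
      rw [show (((n:ℝ)^δ)^3) = ((n:ℝ)^δ)^((3:ℕ):ℝ) from (Real.rpow_natCast _ 3).symm,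
        ← Real.rpow_mul hn0.le]
      push_cast
      rw [mul_comm]
    have hγr : (n:ℝ)^β * (n:ℝ)^(3*δ) = (n:ℝ)^γ := by
      rw [← Real.rpow_add hn0, hγdef]
    rw [Finset.mul_sum, Finset.mul_sum, Finset.mul_sum]
    refine Finset.sum_congr rfl fun m hm => ?_
    rw [mul_pow, hd3]
    have : (n:ℝ)^β * (D^3 * (n:ℝ)^(3*δ) * (m:ℝ)^2) = D^3 * (((n:ℝ)^β * (n:ℝ)^(3*δ)) * (m:ℝ)^2) := by
      ring
    rw [this, hγr]
  refine step1.trans ?_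
  rw [sum_reindex X (fun n m => (n:ℝ)^γ * (m:ℝ)^2)]
  have step3 : ∑ m ∈ Finset.Icc 1 (Nat.sqrt X),
      ∑ k ∈ Finset.Icc 1 (X / m ^ 2), ((m ^ 2 * k : ℕ):ℝ)^γ * (m:ℝ)^2
      = ∑ m ∈ Finset.Icc 1 (Nat.sqrt X),
          (m:ℝ)^((2:ℝ)*γ) * (m:ℝ)^2 * (∑ k ∈ Finset.Icc 1 (X / m ^ 2), (k:ℝ)^γ) := by
    refine Finset.sum_congr rfl fun m hm => ?_
    have hm1 : 1 ≤ m := (Finset.mem_Icc.1 hm).1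
    have hm0 : (0:ℝ) < (m:ℝ) := by exact_mod_cast hm1
    rw [Finset.mul_sum]
    refine Finset.sum_congr rfl fun k hk => ?_
    have hcast : ((m ^ 2 * k : ℕ):ℝ) = (m:ℝ)^2 * (k:ℝ) := by push_cast; ring
    rw [hcast, Real.mul_rpow (by positivity) (Nat.cast_nonneg k)]
    have h2 : ((m:ℝ)^2)^γ = (m:ℝ)^((2:ℝ)*γ) := by
      rw [show ((m:ℝ)^2) = (m:ℝ)^((2:ℕ):ℝ) from (Real.rpow_natCast _ 2).symm,
        ← Real.rpow_mul hm0.le]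
      norm_num
    rw [h2]
    ring
  rw [step3]
  have := hC2 X hX
  calc D^3 * ∑ m ∈ Finset.Icc 1 (Nat.sqrt X),
        (m:ℝ)^((2:ℝ)*γ) * (m:ℝ)^2 * (∑ k ∈ Finset.Icc 1 (X / m ^ 2), (k:ℝ)^γ)
      ≤ D^3 * (C2 * (X:ℝ)^(3/2 + γ)) := mul_le_mul_of_nonneg_left this (by positivity)
    _ ≤ D^3 * (C2 * (X:ℝ)^(3/2 + β + ε)) := by
        refine mul_le_mul_of_nonneg_left (mul_le_mul_of_nonneg_left ?_ hC20) (by positivity)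
        refine Real.rpow_le_rpow_of_exponent_le hX1 ?_
        rw [hγdef]; linarith
    _ = D^3 * C2 * (X:ℝ)^(3/2 + β + ε) := (mul_assoc _ _ _).symm
end
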